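/- arXiv:2602.02855 — 2 statements merged into one kernel-verified Lean document; each statement's English description precedes it below -/
import Mathlib

section
/- Let k = 2p+1 with an integer p ≥ 1 (so k ≥ 3 is odd), let μ₀ = √(1 − 2/k) ∈ (0,1), and let A : (0,1) → ℝ be the drift coefficient defined in the context. Then: (i) for every μ ∈ (μ₀, 1), A(μ) > 0; (ii) as μ → 0⁺ one has A(μ) = −( (2p+1)!/(2p+1) ) · μ / ( 2p · p! · (p−1)! · 2^{2p−1} ) + O(μ²); in particular there exists ε₀ > 0 such that A(μ) < 0 for all μ ∈ (0, ε₀). -/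
/-!
If `μ² > 1 - 2/k`, every summand of `f(k, μ)` is `≤ 0`: its prefactor `1 + k(μ² - 1)/(2m)` is
at least `1 - 1/m ≥ 0`, and `(μ² - 1)^(2m-1)` is an odd power of a negative number. Together with
`μ^(k-1)(μ^k - 1) < 0` this makes `A(μ) > 0`.

For odd `k = 2p + 1` every power `μ^(2(k-2m))` in `f` contains `μ²`, so `A(μ) = μ g(μ)` with `g`
a polynomial; the only term of `g` surviving at `0` is `m = p`, which gives
`g(0) = -(k!/k) / (2p · p! · (p-1)! · 2^(2p-1)) < 0`. Differentiability of `g` at `0` then yields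
`A(μ) - g(0) μ = O(μ²)`, and continuity yields `A < 0` on some `(0, ε₀)`.
-/

open Finset in
/-- The auxiliary function `f(k,μ)` appearing in the drift coefficients of the
linearized LoRA search-phase dynamics for a pure Hermite activation `He_k`. -/
noncomputable def fAux (k : ℕ) (μ : ℝ) : ℝ :=
  ∑ m ∈ Finset.Icc 1 (k / 2),
    (1 + (k : ℝ) * (μ ^ 2 - 1) / (2 * (m : ℝ))) * μ ^ (2 * (k - 2 * m)) *
      (μ ^ 2 - 1) ^ (2 * m - 1) /
      (((k - 2 * m).factorial : ℝ) * (m.factorial : ℝ) * ((m - 1).factorial : ℝ) *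
        (2 : ℝ) ^ (2 * m - 1))

/-- The rescaled drift coefficient `A(μ)` of the linearized dynamics. -/
noncomputable def Acoef (k : ℕ) (μ : ℝ) : ℝ :=
  -(μ ^ (k - 1) * (μ ^ k - 1) + ((k.factorial : ℝ) / (k : ℝ)) * μ⁻¹ * fAux k μ)

/-- The rescaled drift coefficient `B(μ)` of the linearized dynamics. -/
noncomputable def Bcoef (k : ℕ) (μ : ℝ) : ℝ :=
  -(μ ^ (2 * k - 2) + ((k.factorial : ℝ) / (k : ℝ)) * (μ ^ 2)⁻¹ * fAux k μ)

/-- The characteristic escape-time prefactor `τ(μ)`. -/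
noncomputable def tauCoef (k : ℕ) (μ : ℝ) : ℝ :=
  (-(Bcoef k μ) + Real.sqrt ((Bcoef k μ) ^ 2 + 4 * (Acoef k μ) ^ 2)) /
    (2 * (Acoef k μ) ^ 2)

open Finset Filter Topology Asymptotics

theorem isBigO_mul_sub_mul_apply_zero {g : ℝ → ℝ} (hg : DifferentiableAt ℝ g 0) :
    (fun x => x * g x - g 0 * x) =O[𝓝 0] (fun x => x ^ 2) := by
  have h := (isBigO_refl (fun x : ℝ => x) (𝓝 0)).mul (by simpa using hg.isBigO_sub)
  refine h.congr' (Eventually.of_forall fun x => ?_) (Eventually.of_forall fun x => ?_) <;> ring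

theorem exists_Ioo_mul_neg {g : ℝ → ℝ} (hg : ContinuousAt g 0) (h0 : g 0 < 0) :
    ∃ ε > (0 : ℝ), ∀ x ∈ Set.Ioo (0 : ℝ) ε, x * g x < 0 := by
  obtain ⟨ε, hε, hsub⟩ := mem_nhdsGT_iff_exists_Ioo_subset.mp
    (nhdsWithin_le_nhds (hg.eventually_lt_const h0))
  exact ⟨ε, hε, fun x hx => mul_neg_of_pos_of_neg hx.1 (hsub hx)⟩

theorem fAux_nonpos {k : ℕ} {μ : ℝ} (hμ : μ ^ 2 ≤ 1) (hk : -2 ≤ (k : ℝ) * (μ ^ 2 - 1)) :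
    fAux k μ ≤ 0 := by
  refine sum_nonpos fun m hm => div_nonpos_of_nonpos_of_nonneg ?_ (by positivity)
  have hm1 : (1 : ℝ) ≤ m := by exact_mod_cast (mem_Icc.mp hm).1
  have hfirst : 0 ≤ 1 + (k : ℝ) * (μ ^ 2 - 1) / (2 * m) := by
    have : -1 ≤ (k : ℝ) * (μ ^ 2 - 1) / (2 * m) := by
      rw [le_div_iff₀ (by positivity)]
      linarith
    linarith
  have hodd : Odd (2 * m - 1) := ⟨m - 1, by have := (mem_Icc.mp hm).1; omega⟩
  exact mul_nonpos_of_nonneg_of_nonpos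
    (mul_nonneg hfirst (by rw [pow_mul]; positivity))
    (hodd.pow_nonpos (by linarith))

theorem Acoef_pos {k : ℕ} {μ : ℝ} (hk : 1 ≤ k) (hμ₀ : 0 < μ) (hμ₁ : μ < 1)
    (hkμ : -2 ≤ (k : ℝ) * (μ ^ 2 - 1)) : 0 < Acoef k μ := by
  have hpow : μ ^ (k - 1) * (μ ^ k - 1) < 0 :=
    mul_neg_of_pos_of_neg (by positivity) (by linarith [pow_lt_one₀ hμ₀.le hμ₁ (by omega : k ≠ 0)])
  have hf : fAux k μ ≤ 0 := fAux_nonpos (by nlinarith) hkμ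
  have hc : 0 ≤ (k.factorial : ℝ) / k * μ⁻¹ := by positivity
  unfold Acoef
  linarith [mul_nonpos_of_nonneg_of_nonpos hc hf]

theorem neg_two_lt_mul_sq_sub_one_of_sqrt_lt {k μ : ℝ} (hk : 0 < k)
    (h : Real.sqrt (1 - 2 / k) < μ) : -2 < k * (μ ^ 2 - 1) := by
  have hsq : 1 - 2 / k < μ ^ 2 := (Real.sqrt_lt' (lt_of_le_of_lt (Real.sqrt_nonneg _) h)).mp h
  have : k * (1 - 2 / k) = k - 2 := by field_simp
  nlinarith

/-- `fAux (2p+1) μ / μ²`, which is a polynomial in `μ`. -/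
noncomputable def fAuxQuot (p : ℕ) (μ : ℝ) : ℝ :=
  ∑ m ∈ Icc 1 p,
    (1 + ((2 * p + 1 : ℕ) : ℝ) * (μ ^ 2 - 1) / (2 * (m : ℝ))) * μ ^ (4 * (p - m)) *
      (μ ^ 2 - 1) ^ (2 * m - 1) /
      (((2 * p + 1 - 2 * m).factorial : ℝ) * (m.factorial : ℝ) * ((m - 1).factorial : ℝ) *
        (2 : ℝ) ^ (2 * m - 1))

/-- `Acoef (2p+1) μ / μ`, which is a polynomial in `μ`. -/
noncomputable def AcoefQuot (p : ℕ) (μ : ℝ) : ℝ :=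
  -(μ ^ (2 * p - 1) * (μ ^ (2 * p + 1) - 1) +
    (((2 * p + 1).factorial : ℝ) / ((2 * p + 1 : ℕ) : ℝ)) * fAuxQuot p μ)

theorem fAux_odd_eq_sq_mul (p : ℕ) (μ : ℝ) : fAux (2 * p + 1) μ = μ ^ 2 * fAuxQuot p μ := by
  rw [fAux, fAuxQuot, (by omega : (2 * p + 1) / 2 = p), mul_sum]
  refine sum_congr rfl fun m hm => ?_
  rw [(by have := (mem_Icc.mp hm).2; omega : 2 * (2 * p + 1 - 2 * m) = 2 + 4 * (p - m)), pow_add]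
  ring

theorem Acoef_odd_eq_mul {p : ℕ} (hp : 1 ≤ p) (μ : ℝ) :
    Acoef (2 * p + 1) μ = μ * AcoefQuot p μ := by
  rw [Acoef, AcoefQuot, fAux_odd_eq_sq_mul, (by omega : 2 * p + 1 - 1 = 2 * p - 1 + 1)]
  field_simp
  ring

theorem differentiable_AcoefQuot (p : ℕ) : Differentiable ℝ (AcoefQuot p) := by
  unfold AcoefQuot fAuxQuot
  fun_prop

theorem fAuxQuot_zero {p : ℕ} (hp : 1 ≤ p) :
    fAuxQuot p 0 = 1 / (2 * (p : ℝ) * p.factorial * (p - 1).factorial * 2 ^ (2 * p - 1)) := by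
  -- only the top term `m = p` carries no positive power of `μ`
  rw [fAuxQuot, sum_eq_single_of_mem p (by simp [hp]) fun m hm hne => by
    rw [zero_pow (by have := (mem_Icc.mp hm).2; omega : 4 * (p - m) ≠ 0)]; simp]
  have hodd : Odd (2 * p - 1) := ⟨p - 1, by omega⟩
  have hp' : (p : ℝ) ≠ 0 := by positivity
  simp [(by omega : 2 * p + 1 - 2 * p = 1), hodd.neg_one_pow]
  field_simp
  ring

theorem AcoefQuot_zero {p : ℕ} (hp : 1 ≤ p) :
    AcoefQuot p 0 = -((((2 * p + 1).factorial : ℝ) / (2 * (p : ℝ) + 1)) /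
      (2 * (p : ℝ) * (p.factorial : ℝ) * ((p - 1).factorial : ℝ) * (2 : ℝ) ^ (2 * p - 1))) := by
  rw [AcoefQuot, fAuxQuot_zero hp, zero_pow (by omega)]
  push_cast
  ring

/-- For an odd pure Hermite activation of degree `k = 2p+1 ≥ 3`:
(i) `A(μ) > 0` for all `μ ∈ (μ₀, 1)` with `μ₀ = √(1 − 2/k)`;
(ii) `A(μ) = −((2p+1)!/(2p+1))·μ/(2p·p!·(p−1)!·2^{2p−1}) + O(μ²)` as `μ → 0⁺`,
and in particular `A(μ) < 0` for all sufficiently small `μ > 0`. -/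
theorem stmt3 (p : ℕ) (hp : 1 ≤ p) :
    (∀ μ ∈ Set.Ioo (Real.sqrt (1 - 2 / (2 * (p : ℝ) + 1))) 1,
        0 < Acoef (2 * p + 1) μ) ∧
    (fun μ : ℝ => Acoef (2 * p + 1) μ +
        (((2 * p + 1).factorial : ℝ) / (2 * (p : ℝ) + 1)) * μ /
          (2 * (p : ℝ) * (p.factorial : ℝ) * ((p - 1).factorial : ℝ) *
            (2 : ℝ) ^ (2 * p - 1)))
      =O[nhdsWithin 0 (Set.Ioi 0)] (fun μ : ℝ => μ ^ 2) ∧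
    ∃ ε₀ > (0 : ℝ), ∀ μ ∈ Set.Ioo (0 : ℝ) ε₀, Acoef (2 * p + 1) μ < 0 := by
  have hA : Acoef (2 * p + 1) = fun μ => μ * AcoefQuot p μ := funext (Acoef_odd_eq_mul hp)
  have hg := differentiable_AcoefQuot p 0
  refine ⟨fun μ ⟨hμ₀, hμ₁⟩ => Acoef_pos (by omega) (lt_of_le_of_lt (Real.sqrt_nonneg _) hμ₀) hμ₁
      (neg_two_lt_mul_sq_sub_one_of_sqrt_lt (by positivity) (by exact_mod_cast hμ₀)).le,
    ?_, ?_⟩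
  · refine (isBigO_mul_sub_mul_apply_zero hg).mono nhdsWithin_le_nhds |>.congr_left fun μ => ?_
    rw [hA, AcoefQuot_zero hp]
    ring
  · rw [hA]
    refine exists_Ioo_mul_neg hg.continuousAt ?_
    rw [AcoefQuot_zero hp, neg_lt_zero]
    positivity
end

section
/- Let k⋆, k ∈ ℕ with k ≤ k⋆ − 2 and k ≡ k⋆ (mod 2), and let r > 0. Then r^{(k+1)/2} · ∫ z · He_k(z) · He_{k⋆}′(√r · z) dγ(z) = k⋆! · r^k · ((r − 1)/2)^{(k⋆ − k − 2)/2} / ((k⋆ − k − 2)/2)! · (k⋆·r − k)/(k⋆ − k), where He_{k⋆}′ denotes the derivative of the polynomial He_{k⋆}. Moreover, for k = k⋆ one has r^{(k⋆+1)/2} · ∫ z · He_{k⋆}(z) · He_{k⋆}′(√r · z) dγ(z) = k⋆ · k⋆! · r^{k⋆}. -/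
/-!
Everything reduces to Gaussian moments of polynomials, which Stein's identity
`E[z p(z)] = E[p'(z)]` computes. Together with `He_{n+1} = X He_n - He_n'` and
`He_n' = n He_{n-1}`, it gives for `F(a, b) = E[He_a(z) He_b(s z)]` the recursions
`F(a+1, b+1) = s (b+1) F(a, b)`, `F(a+1, 0) = 0` and `F(0, b+2) = (s² - 1)(b+1) F(0, b)`, whence
`F(a, a+2m) = s^a (a+2m)!/m! ((s² - 1)/2)^m` and `F(a, b) = 0` for `b < a`.
Since `z He_k = He_{k+1} + k He_{k-1}` and `He_{k⋆}' = k⋆ He_{k⋆-1}`, the integral in question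
is `k⋆ (F(k+1, k⋆-1) + k F(k-1, k⋆-1))` with `s = √r`.
-/

open MeasureTheory ProbabilityTheory

/-- The `n`-th probabilists' Hermite polynomial, as a real function. -/
noncomputable def He (n : ℕ) (x : ℝ) : ℝ :=
  Polynomial.aeval x (Polynomial.hermite n)

open Polynomial Real Nat
open scoped NNReal

namespace ProbabilityTheory

lemma integrable_pow_gaussianReal (μ : ℝ) (v : ℝ≥0) (n : ℕ) :
    Integrable (fun x : ℝ => x ^ n) (gaussianReal μ v) := by
  refine (integrable_norm_iff (by fun_prop)).1 ?_
  simpa [norm_pow] using (memLp_id_gaussianReal (μ := μ) (v := v) n).integrable_norm_pow'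

lemma integrable_eval_gaussianReal (μ : ℝ) (v : ℝ≥0) (p : ℝ[X]) :
    Integrable (fun x => p.eval x) (gaussianReal μ v) := by
  simp_rw [eval_eq_sum_range]
  exact integrable_finsetSum _ fun i _ => (integrable_pow_gaussianReal μ v i).const_mul _

lemma integrable_gaussianReal_iff (μ : ℝ) {v : ℝ≥0} (hv : v ≠ 0) {f : ℝ → ℝ} :
    Integrable f (gaussianReal μ v) ↔ Integrable (fun x => gaussianPDFReal μ v x * f x) := by
  rw [gaussianReal_of_var_ne_zero μ hv,
    integrable_withDensity_iff_integrable_smul' (measurable_gaussianPDF μ v)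
      (ae_of_all _ fun _ => gaussianPDF_lt_top)]
  simp [toReal_gaussianPDF]

lemma hasDerivAt_gaussianPDFReal_zero_one (x : ℝ) :
    HasDerivAt (gaussianPDFReal 0 1) (-x * gaussianPDFReal 0 1 x) x := by
  have h : HasDerivAt (fun y : ℝ => -y ^ 2 / 2) (-x) x := by
    simpa using ((hasDerivAt_pow 2 x).neg.div_const 2).congr_deriv (by ring)
  simp only [gaussianPDFReal_def, sub_zero, NNReal.coe_one, mul_one]
  exact (h.exp.const_mul _).congr_deriv (by ring)

theorem integral_mul_gaussianReal_eq_integral_deriv {f f' : ℝ → ℝ}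
    (hf : ∀ x, HasDerivAt f (f' x) x) (hf_int : Integrable f (gaussianReal 0 1))
    (hf'_int : Integrable f' (gaussianReal 0 1))
    (hxf_int : Integrable (fun x => x * f x) (gaussianReal 0 1)) :
    ∫ x, x * f x ∂gaussianReal 0 1 = ∫ x, f' x ∂gaussianReal 0 1 := by
  rw [integrable_gaussianReal_iff 0 one_ne_zero] at hf_int hf'_int hxf_int
  simp only [integral_gaussianReal_eq_integral_smul one_ne_zero, smul_eq_mul]
  have hderiv : ∀ x, HasDerivAt (fun y => gaussianPDFReal 0 1 y * f y)
      (gaussianPDFReal 0 1 x * f' x - gaussianPDFReal 0 1 x * (x * f x)) x := fun x =>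
    ((hasDerivAt_gaussianPDFReal_zero_one x).mul (hf x)).congr_deriv (by ring)
  have := integral_eq_zero_of_hasDerivAt_of_integrable hderiv (hf'_int.sub hxf_int) hf_int
  rw [integral_sub hf'_int hxf_int] at this
  linarith

end ProbabilityTheory

namespace Polynomial

theorem derivative_hermite_succ (n : ℕ) :
    derivative (hermite (n + 1)) = ((n : ℤ[X]) + 1) * hermite n := by
  induction n with
  | zero => simp
  | succ n ih =>
    rw [hermite_succ (n + 1), derivative_sub, derivative_mul, derivative_X, ih, derivative_mul,
      hermite_succ n]
    simp only [derivative_add, derivative_natCast, derivative_one]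
    push_cast
    ring

theorem derivative_hermite (n : ℕ) : derivative (hermite n) = (n : ℤ[X]) * hermite (n - 1) := by
  cases n with
  | zero => simp
  | succ n => rw [derivative_hermite_succ]; simp

end Polynomial

noncomputable def gaussianExpectation : ℝ[X] →ₗ[ℝ] ℝ where
  toFun p := ∫ x, p.eval x ∂gaussianReal 0 1
  map_add' p q := by
    simp only [eval_add]
    exact integral_add (integrable_eval_gaussianReal 0 1 p) (integrable_eval_gaussianReal 0 1 q)
  map_smul' c p := by
    simp only [eval_smul, smul_eq_mul, integral_const_mul, RingHom.id_apply]

lemma gaussianExpectation_apply (p : ℝ[X]) :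
    gaussianExpectation p = ∫ x, p.eval x ∂gaussianReal 0 1 := rfl

lemma gaussianExpectation_one : gaussianExpectation 1 = 1 := by
  simp [gaussianExpectation_apply]

lemma gaussianExpectation_X_mul (p : ℝ[X]) :
    gaussianExpectation (X * p) = gaussianExpectation (derivative p) := by
  have hXp := integrable_eval_gaussianReal 0 1 (X * p)
  simp only [eval_mul, eval_X] at hXp
  simp only [gaussianExpectation_apply, eval_mul, eval_X]
  exact integral_mul_gaussianReal_eq_integral_deriv (fun x => p.hasDerivAt x)
    (integrable_eval_gaussianReal 0 1 p) (integrable_eval_gaussianReal 0 1 _) hXp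

noncomputable def hermiteReal (n : ℕ) : ℝ[X] := (hermite n).map (algebraMap ℤ ℝ)

lemma He_eq_eval (n : ℕ) : He n = fun x => (hermiteReal n).eval x := by
  ext x
  rw [He, hermiteReal, eval_map_algebraMap]

lemma hermiteReal_zero : hermiteReal 0 = 1 := by simp [hermiteReal]

lemma derivative_hermiteReal (n : ℕ) :
    derivative (hermiteReal n) = (n : ℝ) • hermiteReal (n - 1) := by
  rw [hermiteReal, derivative_map, derivative_hermite, Polynomial.map_mul, Polynomial.map_natCast,
    Nat.cast_smul_eq_nsmul, nsmul_eq_mul, hermiteReal]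

lemma hermiteReal_succ (n : ℕ) :
    hermiteReal (n + 1) = X * hermiteReal n - derivative (hermiteReal n) := by
  simp only [hermiteReal, hermite_succ, Polynomial.map_sub, Polynomial.map_mul, map_X,
    derivative_map]

lemma X_mul_hermiteReal (n : ℕ) :
    X * hermiteReal n = hermiteReal (n + 1) + (n : ℝ) • hermiteReal (n - 1) := by
  rw [hermiteReal_succ, derivative_hermiteReal]
  ring

noncomputable def hermiteCrossMoment (s : ℝ) (a b : ℕ) : ℝ :=
  gaussianExpectation (hermiteReal a * (hermiteReal b).comp (C s * X))

lemma derivative_comp_C_mul_X (s : ℝ) (p : ℝ[X]) :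
    derivative (p.comp (C s * X)) = s • (derivative p).comp (C s * X) := by
  rw [derivative_comp, derivative_C_mul_X, smul_eq_C_mul, mul_comm]

lemma hermiteCrossMoment_succ_left (s : ℝ) (a b : ℕ) :
    hermiteCrossMoment s (a + 1) b =
      s * gaussianExpectation (hermiteReal a * (derivative (hermiteReal b)).comp (C s * X)) := by
  have hderiv : derivative (hermiteReal a * (hermiteReal b).comp (C s * X)) =
      derivative (hermiteReal a) * (hermiteReal b).comp (C s * X) +
        s • (hermiteReal a * (derivative (hermiteReal b)).comp (C s * X)) := by
    rw [derivative_mul, derivative_comp_C_mul_X, mul_smul_comm]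
  rw [hermiteCrossMoment, hermiteReal_succ, sub_mul, mul_assoc, map_sub,
    gaussianExpectation_X_mul, hderiv, map_add, map_smul, smul_eq_mul]
  ring

lemma hermiteCrossMoment_succ_succ (s : ℝ) (a b : ℕ) :
    hermiteCrossMoment s (a + 1) (b + 1) = s * (b + 1) * hermiteCrossMoment s a b := by
  rw [hermiteCrossMoment_succ_left, derivative_hermiteReal, smul_comp, mul_smul_comm, map_smul,
    smul_eq_mul, hermiteCrossMoment, add_tsub_cancel_right]
  push_cast
  ring

lemma hermiteCrossMoment_eq_zero_of_lt (s : ℝ) {a b : ℕ} (h : b < a) :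
    hermiteCrossMoment s a b = 0 := by
  obtain ⟨a, rfl⟩ : ∃ a', a = a' + 1 := ⟨a - 1, by omega⟩
  induction b generalizing a with
  | zero => simp [hermiteCrossMoment_succ_left, hermiteReal_zero]
  | succ b ih =>
    obtain ⟨a, rfl⟩ : ∃ a', a = a' + 1 := ⟨a - 1, by omega⟩
    rw [hermiteCrossMoment_succ_succ, ih a (by omega), mul_zero]

lemma hermiteCrossMoment_zero_succ (s : ℝ) (b : ℕ) :
    hermiteCrossMoment s 0 (b + 1) =
      (s ^ 2 - 1) * gaussianExpectation ((derivative (hermiteReal b)).comp (C s * X)) := by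
  have hstein := gaussianExpectation_X_mul ((hermiteReal b).comp (C s * X))
  rw [derivative_comp_C_mul_X, map_smul, smul_eq_mul] at hstein
  rw [hermiteCrossMoment, hermiteReal_zero, one_mul, hermiteReal_succ, sub_comp, mul_comp,
    X_comp, mul_assoc, ← smul_eq_C_mul, map_sub, map_smul, smul_eq_mul, hstein]
  ring

lemma hermiteCrossMoment_zero_add_two (s : ℝ) (b : ℕ) :
    hermiteCrossMoment s 0 (b + 2) = (s ^ 2 - 1) * (b + 1) * hermiteCrossMoment s 0 b := by
  rw [hermiteCrossMoment_zero_succ, derivative_hermiteReal, smul_comp, map_smul, smul_eq_mul,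
    hermiteCrossMoment, hermiteReal_zero, one_mul, add_tsub_cancel_right]
  push_cast
  ring

lemma hermiteCrossMoment_zero_two_mul (s : ℝ) (m : ℕ) :
    hermiteCrossMoment s 0 (2 * m) = (2 * m)! / m ! * ((s ^ 2 - 1) / 2) ^ m := by
  induction m with
  | zero => simp [hermiteCrossMoment, hermiteReal_zero, gaussianExpectation_one]
  | succ m ih =>
    rw [mul_add_one, hermiteCrossMoment_zero_add_two, ih, factorial_succ, factorial_succ,
      factorial_succ]
    push_cast
    field_simp
    ring

lemma hermiteCrossMoment_add_left (s : ℝ) (a b : ℕ) :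
    hermiteCrossMoment s a (a + b) = s ^ a * ((a + b)! / b !) * hermiteCrossMoment s 0 b := by
  induction a with
  | zero => simp [factorial_ne_zero]
  | succ a ih =>
    rw [add_right_comm, hermiteCrossMoment_succ_succ, ih, factorial_succ]
    push_cast
    field_simp
    ring

lemma hermiteCrossMoment_add_two_mul (s : ℝ) (a m : ℕ) :
    hermiteCrossMoment s a (a + 2 * m) = s ^ a * (a + 2 * m)! / m ! * ((s ^ 2 - 1) / 2) ^ m := by
  rw [hermiteCrossMoment_add_left, hermiteCrossMoment_zero_two_mul]
  field_simp

lemma integral_mul_He_mul_deriv_He (s : ℝ) (a b : ℕ) :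
    ∫ z, z * He a z * deriv (He b) (s * z) ∂gaussianReal 0 1 =
      b * (hermiteCrossMoment s (a + 1) (b - 1) + a * hermiteCrossMoment s (a - 1) (b - 1)) := by
  have hpoly : (fun z => z * He a z * deriv (He b) (s * z)) = fun z =>
      (X * hermiteReal a * (derivative (hermiteReal b)).comp (C s * X)).eval z := by
    ext z
    simp [He_eq_eval, eval_comp]
  rw [hpoly, ← gaussianExpectation_apply, X_mul_hermiteReal, derivative_hermiteReal, smul_comp,
    add_mul, smul_mul_assoc, mul_smul_comm, mul_smul_comm]
  simp only [map_add, map_smul, hermiteCrossMoment, smul_eq_mul]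
  ring

lemma sq_rpow_add_one_div_two {s : ℝ} (hs : 0 ≤ s) (n : ℕ) :
    (s ^ 2) ^ (((n : ℝ) + 1) / 2) = s ^ (n + 1) := by
  rw [← Real.rpow_natCast s 2, ← Real.rpow_mul hs, ← Real.rpow_natCast]
  congr 1
  push_cast
  ring

/-- The coefficient `σ̄_k^{[r]}` of the activation `He_{k⋆}`. -/
noncomputable def sigmaBar (kstar k : ℕ) (r : ℝ) : ℝ :=
  r ^ (((k : ℝ) + 1) / 2) * ∫ z, z * He k z * deriv (He kstar) (√r * z) ∂gaussianReal 0 1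

lemma sigmaBar_sq {s : ℝ} (hs : 0 ≤ s) (kstar k : ℕ) :
    sigmaBar kstar k (s ^ 2) = s ^ (k + 1) * (kstar * (hermiteCrossMoment s (k + 1) (kstar - 1) +
      k * hermiteCrossMoment s (k - 1) (kstar - 1))) := by
  rw [sigmaBar, sq_rpow_add_one_div_two hs, Real.sqrt_sq hs, integral_mul_He_mul_deriv_He]

lemma sigmaBar_self {s : ℝ} (hs : 0 ≤ s) (n : ℕ) :
    sigmaBar n n (s ^ 2) = n * n ! * (s ^ 2) ^ n := by
  cases n with
  | zero => simp [sigmaBar_sq hs]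
  | succ n =>
    have hdiag := hermiteCrossMoment_add_two_mul s n 0
    simp only [mul_zero, add_zero, factorial_zero, cast_one, div_one, pow_zero, mul_one] at hdiag
    rw [sigmaBar_sq hs, add_tsub_cancel_right, hermiteCrossMoment_eq_zero_of_lt s (by omega),
      hdiag, factorial_succ]
    push_cast
    ring

lemma sigmaBar_add_two_add_two_mul {s : ℝ} (hs : 0 ≤ s) (k m : ℕ) :
    sigmaBar (k + 2 + 2 * m) k (s ^ 2) =
      (k + 2 + 2 * m)! * (s ^ 2) ^ k * ((s ^ 2 - 1) / 2) ^ m / m ! *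
        ((((k + 2 + 2 * m : ℕ) : ℝ) * s ^ 2 - k) / ((k + 2 + 2 * m : ℕ) - k)) := by
  have hden : ((k + 2 + 2 * m : ℕ) : ℝ) - k = 2 * (m + 1) := by push_cast; ring
  rw [hden, sigmaBar_sq hs, show k + 2 + 2 * m - 1 = k + 1 + 2 * m by omega,
    hermiteCrossMoment_add_two_mul, show k + 2 + 2 * m = k + 1 + 2 * m + 1 by ring,
    factorial_succ]
  cases k with
  | zero =>
    push_cast
    field_simp
    ring
  | succ j =>
    rw [add_tsub_cancel_right, show j + 1 + 1 + 2 * m = j + 2 * (m + 1) by ring,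
      hermiteCrossMoment_add_two_mul, factorial_succ m]
    push_cast
    field_simp
    ring

/-- The coefficients `σ̄_k^{[r]} = r^{(k+1)/2}·E[z·He_k(z)·He_{k⋆}′(√r·z)]` for
a pure Hermite activation `He_{k⋆}`: for `k ≤ k⋆ − 2` of the same parity as
`k⋆`, it equals
`k⋆!·r^k·((r−1)/2)^{(k⋆−k−2)/2}/((k⋆−k−2)/2)!·(k⋆r − k)/(k⋆ − k)`,
and for `k = k⋆` it equals `k⋆·k⋆!·r^{k⋆}`. -/
theorem stmt15 (kstar k : ℕ) (hk : k + 2 ≤ kstar) (hpar : k % 2 = kstar % 2)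
    (r : ℝ) (hr : 0 < r) :
    (r ^ (((k : ℝ) + 1) / 2) *
        ∫ z, z * He k z * deriv (He kstar) (Real.sqrt r * z) ∂(gaussianReal 0 1)
      = (kstar.factorial : ℝ) * r ^ k *
          ((r - 1) / 2) ^ ((kstar - k - 2) / 2) /
          (((kstar - k - 2) / 2).factorial : ℝ) *
          (((kstar : ℝ) * r - (k : ℝ)) / ((kstar : ℝ) - (k : ℝ)))) ∧
    (r ^ (((kstar : ℝ) + 1) / 2) *
        ∫ z, z * He kstar z * deriv (He kstar) (Real.sqrt r * z)
          ∂(gaussianReal 0 1)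
      = (kstar : ℝ) * (kstar.factorial : ℝ) * r ^ kstar) := by
  obtain ⟨s, hs, rfl⟩ : ∃ s, 0 ≤ s ∧ s ^ 2 = r :=
    ⟨√r, Real.sqrt_nonneg r, Real.sq_sqrt hr.le⟩
  obtain ⟨m, rfl⟩ : ∃ m, kstar = k + 2 + 2 * m := ⟨(kstar - k - 2) / 2, by omega⟩
  rw [show (k + 2 + 2 * m - k - 2) / 2 = m by omega]
  exact ⟨sigmaBar_add_two_add_two_mul hs k m, sigmaBar_self hs _⟩
end
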